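/- Let x_1,…,x_N be independent real random variables with E[x_i] = 0, E[x_i²] = 1, and E[x_i⁴] = k for all i (with k finite). Let v_1,…,v_N ∈ ℝ, let W be a real D×N matrix with nonzero columns w_1,…,w_N, set n_i = ‖w_i‖², and set y = Σ_i v_i x_i², ỹ = Σ_{a=1}^D ((W x)_a)² + b with b = −Σ_i (n_i − v_i). Then E[(ỹ − y)²] = (k−1)·Σ_i (n_i − v_i)² − 2·Σ_i n_i² + 2·Σ_i n_i²/C_i(W). -/

import Mathlib

/-!
With `G = Wᵀ W` (so `n i = G i i`) and `A = G - diagonal v`, the residual `ỹ - y` equals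
`Q - 𝔼[Q]` for the quadratic form `Q = ∑ᵢⱼ Aᵢⱼ xᵢ xⱼ`, because `𝔼[xᵢ xⱼ] = δᵢⱼ`. The loss is
therefore `Var Q = ∑ Aᵢⱼ Aₗₘ Cov(xᵢ xⱼ, xₗ xₘ)`, and independence gives
`Cov(xᵢ xⱼ, xₗ xₘ) = δᵢₗ δⱼₘ + δᵢₘ δⱼₗ + (k - 3) δᵢⱼₗₘ`, so that the loss is
`2 ∑ᵢⱼ Aᵢⱼ² + (k - 3) ∑ᵢ Aᵢᵢ²`. Splitting off the diagonal of `A` and using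
`∑ⱼ Gᵢⱼ² = nᵢ² / Cᵢ(W)` yields the formula.
-/

open scoped BigOperators
open MeasureTheory ProbabilityTheory Matrix

/-- The capacity of feature `i` for an embedding matrix `W`:
`C_i = (w_i·w_i)² / (∑_j (w_i·w_j)²)`, with `C_i = 0` when `w_i = 0`
(automatic from `0 / 0 = 0`). -/
noncomputable def capacity {D N : ℕ} (W : Matrix (Fin D) (Fin N) ℝ) (i : Fin N) : ℝ :=
  (∑ a, W a i * W a i) ^ 2 / ∑ j, (∑ a, W a i * W a j) ^ 2

open Finset

section Algebra

variable {m ι : Type*} [Fintype m] [Fintype ι] [DecidableEq ι]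

lemma sum_sq_sum_mul_sub_sum_mul_sq (W : Matrix m ι ℝ) (v x : ι → ℝ) :
    ∑ a, (∑ i, W a i * x i) ^ 2 - ∑ i, v i * x i ^ 2 =
      ∑ i, ∑ j, (Wᵀ * W - diagonal v) i j * (x i * x j) := by
  have hquad : ∑ a, (∑ i, W a i * x i) ^ 2 = ∑ i, ∑ j, (Wᵀ * W) i j * (x i * x j) := by
    simp only [sq, sum_mul_sum]
    simp only [mul_apply, transpose_apply, sum_mul]
    rw [sum_comm]
    refine sum_congr rfl fun i _ => ?_
    rw [sum_comm]
    exact sum_congr rfl fun j _ => sum_congr rfl fun a _ => by ring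
  rw [hquad]
  simp [sub_mul, diagonal_apply, ite_mul, sq]

lemma sum_sum_sub_diagonal_sq (G : Matrix ι ι ℝ) (v : ι → ℝ) :
    ∑ i, ∑ j, (G - diagonal v) i j ^ 2 =
      ∑ i, ∑ j, G i j ^ 2 - ∑ i, G i i ^ 2 + ∑ i, (G i i - v i) ^ 2 := by
  have hentry : ∀ i j, (G - diagonal v) i j ^ 2 =
      G i j ^ 2 + if i = j then (G i i - v i) ^ 2 - G i i ^ 2 else 0 := by
    intro i j
    by_cases h : i = j
    · subst h; simp
    · simp [h]
  simp only [hentry, sum_add_distrib, sum_ite_eq, mem_univ, if_true, sum_sub_distrib]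
  ring

lemma mul_mul_mul_eq_prod_pow (x : ι → ℝ) (i j l m : ι) :
    x i * x j * x l * x m = ∏ t, x t ^ ((if t = i then 1 else 0) + (if t = j then 1 else 0) +
      (if t = l then 1 else 0) + (if t = m then 1 else 0)) := by
  simp only [pow_add, prod_mul_distrib]
  simp [pow_ite]

end Algebra

lemma sq_div_capacity {D N : ℕ} (W : Matrix (Fin D) (Fin N) ℝ) (i : Fin N) :
    (∑ a, W a i * W a i) ^ 2 / capacity W i = ∑ j, (∑ a, W a i * W a j) ^ 2 := by
  rcases eq_or_ne (∑ a, W a i * W a i) 0 with h0 | h0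
  · have hcol : ∀ a, W a i = 0 := by
      simpa [mul_self_eq_zero] using
        (sum_eq_zero_iff_of_nonneg fun a _ => mul_self_nonneg (W a i)).1 h0
    simp [hcol]
  · rw [capacity, div_div_cancel₀ (pow_ne_zero 2 h0)]

instance ENNReal.HolderTriple.instFourFourTwo : ENNReal.HolderTriple 4 4 2 := ⟨by
  rw [← two_mul, show (4 : ENNReal) = 2 * 2 by norm_num, ENNReal.mul_inv (by simp) (by simp),
    ← mul_assoc, ENNReal.mul_inv_cancel (by simp) (by simp), one_mul]⟩

namespace ProbabilityTheory

variable {Ω ι : Type*} [MeasurableSpace Ω] {μ : Measure Ω} {X : ι → Ω → ℝ}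

lemma iIndepFun.integral_prod_pow [Fintype ι] (hX : iIndepFun X μ)
    (mX : ∀ i, AEMeasurable (X i) μ) (d : ι → ℕ) :
    ∫ ω, ∏ t, X t ω ^ d t ∂μ = ∏ t, ∫ ω, X t ω ^ d t ∂μ :=
  hX.integral_fun_prod_comp mX fun t => (continuous_pow (d t)).aestronglyMeasurable

variable [DecidableEq ι]

lemma iIndepFun.integral_mul_eq_ite (hX : iIndepFun X μ) (mX : ∀ i, AEMeasurable (X i) μ)
    (h1 : ∀ i, ∫ ω, X i ω ∂μ = 0) (h2 : ∀ i, ∫ ω, X i ω ^ 2 ∂μ = 1) (i j : ι) :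
    ∫ ω, X i ω * X j ω ∂μ = if i = j then 1 else 0 := by
  by_cases hij : i = j
  · subst hij
    simpa [← sq] using h2 i
  · rw [if_neg hij, (hX.indepFun hij).integral_fun_mul_eq_mul_integral
      (mX i).aestronglyMeasurable (mX j).aestronglyMeasurable, h1 i, zero_mul]

variable [Fintype ι] [IsProbabilityMeasure μ]

lemma iIndepFun.integral_mul_mul_mul (hX : iIndepFun X μ) (mX : ∀ i, AEMeasurable (X i) μ)
    (h1 : ∀ i, ∫ ω, X i ω ∂μ = 0) (h2 : ∀ i, ∫ ω, X i ω ^ 2 ∂μ = 1) {k : ℝ}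
    (h4 : ∀ i, ∫ ω, X i ω ^ 4 ∂μ = k) (i j l m : ι) :
    ∫ ω, X i ω * X j ω * X l ω * X m ω ∂μ =
      (if i = j ∧ l = m then 1 else 0) + (if i = l ∧ j = m then 1 else 0) +
        (if i = m ∧ j = l then 1 else 0) + (if i = j ∧ j = l ∧ l = m then k - 3 else 0) := by
  rw [integral_congr_ae (.of_forall fun ω => mul_mul_mul_eq_prod_pow (X · ω) i j l m),
    hX.integral_prod_pow mX]
  rw [← prod_subset (subset_univ {i, j, l, m}) fun t _ ht => by
    simp only [mem_insert, mem_singleton, not_or] at ht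
    simp [ht.1, ht.2.1, ht.2.2.1, ht.2.2.2]]
  -- Each equality pattern of `i, j, l, m` fixes the exponents, hence the product of moments.
  by_cases hij : i = j <;> by_cases hil : i = l <;> by_cases him : i = m <;>
    by_cases hjl : j = l <;> by_cases hjm : j = m <;> by_cases hlm : l = m <;> subst_vars <;>
    simp [prod_insert, eq_comm, *] <;> ring

lemma iIndepFun.covariance_mul_mul (hX : iIndepFun X μ) (hL4 : ∀ i, MemLp (X i) 4 μ)
    (h1 : ∀ i, ∫ ω, X i ω ∂μ = 0) (h2 : ∀ i, ∫ ω, X i ω ^ 2 ∂μ = 1) {k : ℝ}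
    (h4 : ∀ i, ∫ ω, X i ω ^ 4 ∂μ = k) (i j l m : ι) :
    cov[fun ω => X i ω * X j ω, fun ω => X l ω * X m ω; μ] =
      (if i = l ∧ j = m then 1 else 0) + (if i = m ∧ j = l then 1 else 0) +
        (if i = j ∧ j = l ∧ l = m then k - 3 else 0) := by
  have mX : ∀ i, AEMeasurable (X i) μ := fun i => (hL4 i).aestronglyMeasurable.aemeasurable
  rw [covariance_eq_sub ((hL4 j).mul' (hL4 i)) ((hL4 m).mul' (hL4 l))]
  simp only [Pi.mul_apply, ← mul_assoc]
  rw [hX.integral_mul_mul_mul mX h1 h2 h4, hX.integral_mul_eq_ite mX h1 h2,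
    hX.integral_mul_eq_ite mX h1 h2, ite_zero_mul_ite_zero, mul_one]
  ring

lemma iIndepFun.integral_sq_sum_sum_mul_sub_sum (hX : iIndepFun X μ)
    (hL4 : ∀ i, MemLp (X i) 4 μ) (h1 : ∀ i, ∫ ω, X i ω ∂μ = 0)
    (h2 : ∀ i, ∫ ω, X i ω ^ 2 ∂μ = 1) {k : ℝ} (h4 : ∀ i, ∫ ω, X i ω ^ 4 ∂μ = k)
    (A : ι → ι → ℝ) :
    ∫ ω, (∑ i, ∑ j, A i j * (X i ω * X j ω) - ∑ i, A i i) ^ 2 ∂μ =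
      ∑ i, ∑ j, A i j * (A i j + A j i) + (k - 3) * ∑ i, A i i ^ 2 := by
  have mX : ∀ i, AEMeasurable (X i) μ := fun i => (hL4 i).aestronglyMeasurable.aemeasurable
  set Y : ι × ι → Ω → ℝ := fun p ω => A p.1 p.2 * (X p.1 ω * X p.2 ω)
  have hY : ∀ p, MemLp (Y p) 2 μ := fun p => ((hL4 p.2).mul' (hL4 p.1)).const_mul _
  have hQ : ∀ ω, ∑ i, ∑ j, A i j * (X i ω * X j ω) = ∑ p, Y p ω := fun ω =>
    (Fintype.sum_prod_type fun p => Y p ω).symm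
  have hmean : ∫ ω, ∑ p, Y p ω ∂μ = ∑ i, A i i := by
    rw [integral_finsetSum _ fun p _ => (hY p).integrable one_le_two, Fintype.sum_prod_type]
    simp [Y, integral_const_mul, hX.integral_mul_eq_ite mX h1 h2]
  have hvar : ∫ ω, (∑ i, ∑ j, A i j * (X i ω * X j ω) - ∑ i, A i i) ^ 2 ∂μ =
      cov[fun ω => ∑ p, Y p ω, fun ω => ∑ p, Y p ω; μ] := by
    simp_rw [covariance, hQ, hmean, sq]
  rw [hvar, covariance_fun_sum_fun_sum hY hY]
  simp only [Y, covariance_const_mul_left, covariance_const_mul_right, Fintype.sum_prod_type,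
    hX.covariance_mul_mul hL4 h1 h2 h4]
  simp [mul_add, sum_add_distrib, ite_and, mul_sum, sq, mul_comm, mul_left_comm, mul_assoc]

end ProbabilityTheory

theorem quadratic_model_expected_loss_capacity_general
    {Ω : Type*} [MeasurableSpace Ω] (μ : Measure Ω) [IsProbabilityMeasure μ]
    {N D : ℕ} (X : Fin N → Ω → ℝ)
    (hindep : iIndepFun X μ)
    (hL4 : ∀ i, MemLp (X i) 4 μ)
    (h1 : ∀ i, ∫ ω, X i ω ∂μ = 0)
    (h2 : ∀ i, ∫ ω, (X i ω) ^ 2 ∂μ = 1)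
    (k : ℝ) (h4 : ∀ i, ∫ ω, (X i ω) ^ 4 ∂μ = k)
    (v : Fin N → ℝ) (W : Matrix (Fin D) (Fin N) ℝ)
    (n : Fin N → ℝ) (hn : ∀ i, n i = ∑ a, W a i * W a i)
    (b : ℝ) (hb : b = -∑ i, (n i - v i)) :
    ∫ ω, ((∑ a, (∑ i, W a i * X i ω) ^ 2 + b) - ∑ i, v i * (X i ω) ^ 2) ^ 2 ∂μ =
      (k - 1) * ∑ i, (n i - v i) ^ 2 - 2 * ∑ i, (n i) ^ 2 +
        2 * ∑ i, (n i) ^ 2 / capacity W i := by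
  set A := Wᵀ * W - diagonal v
  have hgram : ∀ i j, (Wᵀ * W) i j = ∑ a, W a i * W a j := fun i j => by simp [mul_apply]
  have hdiag : ∀ i, A i i = n i - v i := fun i => by simp [A, hgram, hn]
  have hresidual : ∀ ω, (∑ a, (∑ i, W a i * X i ω) ^ 2 + b) - ∑ i, v i * X i ω ^ 2 =
      ∑ i, ∑ j, A i j * (X i ω * X j ω) - ∑ i, A i i := fun ω => by
    rw [← sum_sq_sum_mul_sub_sum_mul_sq, hb]
    simp only [hdiag]
    ring
  have hsymm : A.IsSymm :=
    (show (Wᵀ * W).IsSymm by simp [IsSymm, transpose_mul]).sub (isSymm_diagonal v)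
  have hsum_sq : ∑ i, ∑ j, A i j * (A i j + A j i) = 2 * ∑ i, ∑ j, A i j ^ 2 := by
    simp only [hsymm.apply, mul_sum]
    exact sum_congr rfl fun i _ => sum_congr rfl fun j _ => by ring
  simp_rw [hresidual]
  rw [hindep.integral_sq_sum_sum_mul_sub_sum hL4 h1 h2 h4 A, hsum_sq, sum_sum_sub_diagonal_sq]
  simp only [hdiag, hgram, ← sq_div_capacity, ← hn]
  ring

/-- For the quadratic toy model with nonzero embedding columns and
`n_i = ‖w_i‖²`, the expected loss can be written in terms of the capacities:
`E[(ỹ - y)²] = (k-1) ∑ᵢ (nᵢ - vᵢ)² - 2 ∑ᵢ nᵢ² + 2 ∑ᵢ nᵢ²/Cᵢ(W)`. -/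
theorem quadratic_model_expected_loss_capacity
    {Ω : Type*} [MeasurableSpace Ω] (μ : Measure Ω) [IsProbabilityMeasure μ]
    {N D : ℕ} (X : Fin N → Ω → ℝ) (hmeas : ∀ i, Measurable (X i))
    (hindep : iIndepFun X μ)
    (hL4 : ∀ i, MemLp (X i) 4 μ)
    (h1 : ∀ i, ∫ ω, X i ω ∂μ = 0)
    (h2 : ∀ i, ∫ ω, (X i ω) ^ 2 ∂μ = 1)
    (k : ℝ) (h4 : ∀ i, ∫ ω, (X i ω) ^ 4 ∂μ = k)
    (v : Fin N → ℝ) (W : Matrix (Fin D) (Fin N) ℝ)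
    (hnz : ∀ i, Wᵀ i ≠ 0)
    (n : Fin N → ℝ) (hn : ∀ i, n i = ∑ a, W a i * W a i)
    (b : ℝ) (hb : b = -∑ i, (n i - v i)) :
    ∫ ω, ((∑ a, (∑ i, W a i * X i ω) ^ 2 + b) - ∑ i, v i * (X i ω) ^ 2) ^ 2 ∂μ =
      (k - 1) * ∑ i, (n i - v i) ^ 2 - 2 * ∑ i, (n i) ^ 2 +
        2 * ∑ i, (n i) ^ 2 / capacity W i :=
  quadratic_model_expected_loss_capacity_general μ X hindep hL4 h1 h2 k h4 v W n hn b hb
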